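/- arXiv:2408.00134 — 2 statements merged into one kernel-verified Lean document; each statement's English description precedes it below -/
import Mathlib

section
/- Let 0 < α < 1, h > 0, a, b ∈ ℝ, and let U_α(n) = Γ(n+α−1)/Γ(n) for n ≥ 1 with U_α(0) = 0 be the falling factorial kernel. Suppose (x₁(n), x₂(n)) satisfies the fractional difference Hénon recurrence x_i(n) = x_i(0) − ∑_{k=0}^{n−1} G_i(x₁(k), x₂(k)) U_α(n−k), i = 1,2, with G₁(x,y) = −(h^α/Γ(α))(1 − x − a x² + y) and G₂(x,y) = −(h^α/Γ(α))(b x − y), and that the limits (x₁, y₁) = lim_{N→∞} (x₁(2N+1), x₂(2N+1)) and (x₂, y₂) = lim_{N→∞} (x₁(2N+2), x₂(2N+2)) exist. Then: (i) x₂ − x₁ = (h/2)^α [ (x₂ − x₁)(1 + a(x₂ + x₁)) − (y₂ − y₁) ]; (ii) y₂ − y₁ = (h/2)^α [ (y₂ − y₁) − b (x₂ − x₁) ]; (iii) 2 − (x₂ + x₁) − a(x₂² + x₁²) + (y₂ + y₁) = 0; (iv) b(x₁ + x₂) − (y₁ + y₂) = 0. -/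
/-!
Each coordinate solves `z n = z 0 + ∑_{k<n} g k U(n-k)` with a forcing `g` that converges along
even and along odd indices. Pairing consecutive terms, `z (2m) - z 0` is, up to a bounded error,
`∑_{i<m} U(2i+1) (g(2j) + g(2j+1))` with `j = m-1-i`. Since `U(n+1) ≥ αΓ(α)/(n+1)`, the
weights `U(2i+1)` have divergent sum, so convergence of `z (2m)` forces the even and odd limits
of `g` to cancel, which is (iii) and (iv). Then `z (2m+2) - z (2m+1)` is the convolution of `g`
with the absolutely summable differences `U(j+2) - U(j+1)`, and dominated convergence reduces its
limit to `∑ (-1)^j (U(j+2) - U(j+1)) = Γ(α)(1 - 2^(1-α))`. This value is read off the binomial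
series `∑ U(n+1) xⁿ = Γ(α) (1-x)^(-α)` at `x = -1` by Abel's theorem, and gives (i) and (ii).
-/

open Filter Finset Real Topology

noncomputable def fracKernel (α : ℝ) (n : ℕ) : ℝ := Gamma (n + α - 1) / Gamma n

theorem Real.Gamma_add_nat_eq_mul_ascPochhammer {α : ℝ} (hα : 0 < α) (n : ℕ) :
    Gamma (α + n) = Gamma α * (ascPochhammer ℝ n).eval α := by
  induction n with
  | zero => simp
  | succ n ih =>
    rw [ascPochhammer_succ_eval, Nat.cast_succ, ← add_assoc, Gamma_add_one (by positivity), ih]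
    ring

namespace fracKernel

variable {α : ℝ}

theorem succ (n : ℕ) : fracKernel α (n + 1) = Gamma (α + n) / n.factorial := by
  rw [fracKernel, Nat.cast_succ, Gamma_nat_eq_factorial]
  ring_nf

theorem one : fracKernel α 1 = Gamma α := by
  simpa using succ (α := α) 0

theorem succ_eq_Gamma_mul_multichoose (hα : 0 < α) (n : ℕ) :
    fracKernel α (n + 1) = Gamma α * Ring.multichoose α n := by
  have h := Ring.factorial_nsmul_multichoose_eq_ascPochhammer α n
  rw [Polynomial.ascPochhammer_smeval_eq_eval, nsmul_eq_mul] at h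
  rw [succ, Gamma_add_nat_eq_mul_ascPochhammer hα, ← h]
  field_simp

theorem hasSum_mul_pow (hα : 0 < α) {x : ℝ} (hx : |x| < 1) :
    HasSum (fun n => fracKernel α (n + 1) * x ^ n) (Gamma α / (1 - x) ^ α) := by
  have h := (one_div_one_sub_rpow_hasFPowerSeriesOnBall_zero α).hasSum
    (y := x) (by rw [← ENNReal.coe_one, Metric.eball_coe]; simpa using hx)
  simp only [FormalMultilinearSeries.ofScalars_apply_eq, smul_eq_mul, zero_add] at h
  have e : (fun n => fracKernel α (n + 1) * x ^ n)
      = fun n : ℕ => Gamma α * (Ring.choose (α + n - 1) n * x ^ n) := by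
    ext n
    rw [succ_eq_Gamma_mul_multichoose hα, Ring.multichoose_eq, mul_assoc]
  rw [e, div_eq_mul_one_div]
  exact h.mul_left (Gamma α)

theorem succ_succ (hα : 0 < α) (n : ℕ) :
    fracKernel α (n + 2) = fracKernel α (n + 1) * ((α + n) / (n + 1)) := by
  rw [succ, succ, Nat.cast_succ, ← add_assoc, Gamma_add_one (by positivity), Nat.factorial_succ]
  push_cast
  field_simp

theorem pos (hα : 0 < α) (n : ℕ) : 0 < fracKernel α (n + 1) := by
  have := Gamma_pos_of_pos (show 0 < α + n by positivity)
  rw [succ]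
  positivity

theorem antitone (hα0 : 0 < α) (hα1 : α ≤ 1) : Antitone fun n => fracKernel α (n + 1) := by
  refine antitone_nat_of_succ_le fun n => ?_
  rw [succ_succ hα0]
  exact mul_le_of_le_one_right (pos hα0 n).le (div_le_one_of_le₀ (by linarith) (by positivity))

theorem le_Gamma (hα0 : 0 < α) (hα1 : α ≤ 1) (n : ℕ) : fracKernel α (n + 1) ≤ Gamma α :=
  one (α := α) ▸ antitone hα0 hα1 (Nat.zero_le n)

theorem mul_Gamma_le_succ_mul (hα : 0 < α) (n : ℕ) :
    α * Gamma α ≤ (n + 1) * fracKernel α (n + 2) := by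
  induction n with
  | zero => simp [succ_succ hα, one, mul_comm]
  | succ n ih =>
    have hstep : ((n + 1 : ℕ) + 1 : ℝ) * fracKernel α (n + 1 + 2)
        = (α + (n + 1 : ℕ)) * fracKernel α (n + 2) := by
      rw [succ_succ hα (n + 1)]
      field_simp
    rw [hstep]
    push_cast
    nlinarith [pos hα (n + 1)]

theorem mul_Gamma_div_le (hα0 : 0 < α) (hα1 : α ≤ 1) (n : ℕ) :
    α * Gamma α / (n + 1) ≤ fracKernel α (n + 1) := by
  rcases n with _ | n
  · rw [Nat.cast_zero, zero_add, div_one, one]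
    exact mul_le_of_le_one_left (Gamma_pos_of_pos hα0).le hα1
  · rw [div_le_iff₀ (by positivity)]
    push_cast
    nlinarith [mul_Gamma_le_succ_mul hα0 n, pos hα0 (n + 1)]

theorem tendsto_sum_odd_atTop (hα0 : 0 < α) (hα1 : α ≤ 1) :
    Tendsto (fun m => ∑ i ∈ range m, fracKernel α (2 * i + 1)) atTop atTop := by
  have hΓ := Gamma_pos_of_pos hα0
  have hc : 0 < α * Gamma α / 2 := by positivity
  refine tendsto_atTop_mono (fun m => ?_)
    (tendsto_sum_range_one_div_nat_succ_atTop.const_mul_atTop hc)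
  rw [mul_sum]
  refine sum_le_sum fun i _ => le_trans ?_ (mul_Gamma_div_le hα0 hα1 (2 * i))
  rw [mul_one_div, div_div]
  gcongr
  push_cast
  linarith

theorem summable_abs_sub (hα0 : 0 < α) (hα1 : α ≤ 1) :
    Summable fun j => |fracKernel α (j + 2) - fracKernel α (j + 1)| := by
  have habs : ∀ j, |fracKernel α (j + 2) - fracKernel α (j + 1)|
      = fracKernel α (j + 1) - fracKernel α (j + 1 + 1) := fun j => by
    rw [abs_sub_comm, abs_of_nonneg (sub_nonneg.2 (antitone hα0 hα1 (Nat.le_succ j)))]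
  refine summable_of_sum_range_le (c := Gamma α) (fun j => abs_nonneg _) fun n => ?_
  simp only [habs, sum_range_sub', zero_add, one]
  linarith [pos hα0 n]

theorem hasSum_sub_mul_pow (hα : 0 < α) {x : ℝ} (hx : |x| < 1) :
    HasSum (fun j => (fracKernel α (j + 2) - fracKernel α (j + 1)) * x ^ (j + 1))
      (Gamma α * ((1 - x) ^ (1 - α) - 1)) := by
  have hx1 : 0 < 1 - x := by linarith [(abs_lt.1 hx).2]
  have hG := hasSum_mul_pow hα hx
  have hshift := (hasSum_nat_add_iff' 1).2 hG
  simp only [sum_range_one, pow_zero, mul_one, zero_add, one] at hshift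
  have hval : Gamma α / (1 - x) ^ α - Gamma α - x * (Gamma α / (1 - x) ^ α)
      = Gamma α * ((1 - x) ^ (1 - α) - 1) := by
    rw [rpow_sub hx1, rpow_one]; field_simp; ring
  rw [← hval]
  exact (hshift.sub (hG.mul_left x)).congr_fun fun j => by ring

theorem tsum_neg_one_pow_mul_sub (hα0 : 0 < α) (hα1 : α ≤ 1) :
    ∑' j, (-1) ^ j * (fracKernel α (j + 2) - fracKernel α (j + 1))
      = Gamma α * (1 - 2 ^ (1 - α)) := by
  set f : ℕ → ℝ := fun j => (-1) ^ j * (fracKernel α (j + 2) - fracKernel α (j + 1))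
  have hf : Summable f := (summable_abs_sub hα0 hα1).of_norm_bounded fun j => by simp [f]
  have hAbel := Real.tendsto_tsum_powerSeries_nhdsWithin_lt hf.hasSum.tendsto_sum_nat
  have hclosed :
      ∀ᶠ t in 𝓝[<] 1, -t * ∑' n, f n * t ^ n = Gamma α * ((1 + t) ^ (1 - α) - 1) := by
    filter_upwards [Ioo_mem_nhdsLT (show (0:ℝ) < 1 by norm_num)] with t ht
    have ht' : |-t| < 1 := by rw [abs_neg, abs_of_pos ht.1]; exact ht.2
    rw [← tsum_mul_left, ← sub_neg_eq_add, ← (hasSum_sub_mul_pow hα0 ht').tsum_eq]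
    congr 1 with n
    simp only [f, neg_pow t, pow_succ]
    ring
  have hlim :
      Tendsto (fun t : ℝ => -t * ∑' n, f n * t ^ n) (𝓝[<] 1) (𝓝 (-1 * ∑' n, f n)) :=
    (tendsto_nhdsWithin_of_tendsto_nhds (continuous_neg.tendsto 1)).mul hAbel
  have hcont : ContinuousAt (fun t : ℝ => Gamma α * ((1 + t) ^ (1 - α) - 1)) 1 :=
    continuousAt_const.mul (((continuousAt_const.add continuousAt_id).rpow_const
      (Or.inl (by norm_num))).sub continuousAt_const)
  have hvalue := tendsto_nhds_unique (hlim.congr' hclosed)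
    (hcont.tendsto.mono_left nhdsWithin_le_nhds)
  norm_num at hvalue
  linarith

end fracKernel

def volterraConv {R : Type*} [Semiring R] (g U : ℕ → R) (n : ℕ) : R :=
  ∑ k ∈ range n, g k * U (n - k)

theorem Finset.sum_range_two_mul {M : Type*} [AddCommMonoid M] (f : ℕ → M) (m : ℕ) :
    ∑ k ∈ range (2 * m), f k = ∑ i ∈ range m, (f (2 * i) + f (2 * i + 1)) := by
  induction m with
  | zero => simp
  | succ m ih => rw [Nat.mul_succ, sum_range_succ, sum_range_succ, sum_range_succ, ih, add_assoc]

section volterraConv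

variable {R : Type*}

theorem volterraConv_eq_sum_reflect [Semiring R] (g U : ℕ → R) (n : ℕ) :
    volterraConv g U n = ∑ j ∈ range n, g (n - 1 - j) * U (j + 1) := by
  rw [volterraConv, ← sum_range_reflect]
  refine sum_congr rfl fun j hj => ?_
  rw [mem_range] at hj
  congr 2
  omega

theorem volterraConv_neg [Ring R] (g U : ℕ → R) (n : ℕ) :
    volterraConv (-g) U n = -volterraConv g U n := by
  simp [volterraConv]

variable [CommRing R] (g U : ℕ → R)

theorem volterraConv_succ_sub (n : ℕ) :
    volterraConv g U (n + 1) - volterraConv g U n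
      = g n * U 1 + ∑ j ∈ range n, g (n - 1 - j) * (U (j + 2) - U (j + 1)) := by
  have hshift : ∑ j ∈ range n, g (n - (j + 1)) * U (j + 1 + 1)
      = ∑ j ∈ range n, g (n - 1 - j) * U (j + 2) :=
    sum_congr rfl fun j _ => by rw [show n - (j + 1) = n - 1 - j by omega]
  rw [volterraConv_eq_sum_reflect, volterraConv_eq_sum_reflect, sum_range_succ',
    Nat.add_sub_cancel, hshift]
  simp only [mul_sub, sum_sub_distrib, Nat.sub_zero, zero_add]
  ring

theorem volterraConv_two_mul (m : ℕ) :
    volterraConv g U (2 * m)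
      = ∑ i ∈ range m, U (2 * i + 1) * (g (2 * (m - 1 - i)) + g (2 * (m - 1 - i) + 1))
        + ∑ i ∈ range m, g (2 * (m - 1 - i)) * (U (2 * i + 2) - U (2 * i + 1)) := by
  rw [volterraConv_eq_sum_reflect, sum_range_two_mul, ← sum_add_distrib]
  refine sum_congr rfl fun i hi => ?_
  rw [mem_range] at hi
  rw [show 2 * m - 1 - 2 * i = 2 * (m - 1 - i) + 1 by omega,
    show 2 * m - 1 - (2 * i + 1) = 2 * (m - 1 - i) by omega]
  ring

end volterraConv

theorem exists_forall_abs_le_of_tendsto_even_odd {f : ℕ → ℝ} {a b : ℝ}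
    (he : Tendsto (fun N => f (2 * N)) atTop (𝓝 a))
    (ho : Tendsto (fun N => f (2 * N + 1)) atTop (𝓝 b)) : ∃ M, ∀ k, |f k| ≤ M := by
  obtain ⟨Me, hMe⟩ := he.abs.bddAbove_range
  obtain ⟨Mo, hMo⟩ := ho.abs.bddAbove_range
  refine ⟨max Me Mo, fun k => ?_⟩
  obtain ⟨t, rfl | rfl⟩ := Nat.even_or_odd' k
  · exact (hMe ⟨t, rfl⟩).trans (le_max_left _ _)
  · exact (hMo ⟨t, rfl⟩).trans (le_max_right _ _)

theorem tendsto_sum_mul_sub_atTop {a s : ℕ → ℝ} {A c : ℝ} (ha : ∀ i, 0 ≤ a i)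
    (hA : ∀ i, a i ≤ A) (hsum : Tendsto (fun m => ∑ i ∈ range m, a i) atTop atTop)
    (hc : 0 < c) (hs : Tendsto s atTop (𝓝 c)) :
    Tendsto (fun m => ∑ i ∈ range m, a i * s (m - 1 - i)) atTop atTop := by
  obtain ⟨i₀, hi₀⟩ :=
    eventually_atTop.1 (hs.eventually (eventually_ge_nhds (half_lt_self hc)))
  obtain ⟨B, hB⟩ := hs.abs.bddAbove_range
  have hB0 : 0 ≤ B := (abs_nonneg _).trans (hB ⟨0, rfl⟩)
  have hAB : 0 ≤ A * B := mul_nonneg ((ha 0).trans (hA 0)) hB0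
  have hlow : ∀ m, c / 2 * ∑ i ∈ range (m - i₀), a i - i₀ * (A * B)
      ≤ ∑ i ∈ range m, a i * s (m - 1 - i) := by
    intro m
    rw [← sum_range_add_sum_Ico _ (Nat.sub_le m i₀), sub_eq_add_neg, mul_sum]
    refine add_le_add (sum_le_sum fun i hi => ?_) ?_
    · rw [mem_range] at hi
      rw [mul_comm]
      exact mul_le_mul_of_nonneg_left (hi₀ _ (by omega)) (ha i)
    · have hterm : ∀ i ∈ Ico (m - i₀) m, -(A * B) ≤ a i * s (m - 1 - i) := fun i _ => by
        have := (abs_le.1 (hB ⟨m - 1 - i, rfl⟩)).1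
        nlinarith [ha i, hA i]
      have hcard : (#(Ico (m - i₀) m) : ℝ) ≤ i₀ := by
        rw [Nat.card_Ico]; exact_mod_cast (by omega : m - (m - i₀) ≤ i₀)
      calc -(i₀ * (A * B)) ≤ #(Ico (m - i₀) m) • -(A * B) := by
            rw [nsmul_eq_mul]; nlinarith
        _ ≤ _ := card_nsmul_le_sum _ _ _ hterm
  refine tendsto_atTop_mono hlow (tendsto_atTop_add_const_right _ _ ?_)
  exact (hsum.comp (tendsto_sub_atTop_nat i₀)).const_mul_atTop (half_pos hc)

theorem tendsto_sum_range_mul_of_tendsto_even_odd {f d : ℕ → ℝ} {a b : ℝ}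
    (hd : Summable fun j => |d j|) (he : Tendsto (fun N => f (2 * N)) atTop (𝓝 a))
    (ho : Tendsto (fun N => f (2 * N + 1)) atTop (𝓝 b)) :
    Tendsto (fun m => ∑ j ∈ range (2 * m + 1), f (2 * m - j) * d j) atTop
      (𝓝 (∑' j, (if Even j then a else b) * d j)) := by
  obtain ⟨M, hM⟩ := exists_forall_abs_le_of_tendsto_even_odd he ho
  let F : ℕ → ℕ → ℝ := fun m j => if j ≤ 2 * m then f (2 * m - j) * d j else 0
  have hF : ∀ m, ∑ j ∈ range (2 * m + 1), f (2 * m - j) * d j = ∑' j, F m j := fun m => by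
    rw [tsum_eq_sum (s := range (2 * m + 1)) fun j hj => if_neg (by simpa using hj)]
    exact sum_congr rfl fun j hj => (if_pos (by simpa [Nat.lt_succ_iff] using hj)).symm
  simp only [hF]
  refine tendsto_tsum_of_dominated_convergence (hd.mul_left M) (fun j => ?_)
    (Eventually.of_forall fun m j => ?_)
  · obtain ⟨t, rfl | rfl⟩ := Nat.even_or_odd' j
    · rw [if_pos (even_two_mul t)]
      refine ((he.comp (tendsto_sub_atTop_nat t)).mul_const (d (2 * t))).congr' ?_
      filter_upwards [eventually_ge_atTop t] with m hm
      simp only [F, Function.comp_apply, if_pos (by omega : 2 * t ≤ 2 * m), Nat.mul_sub]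
    · rw [if_neg (Nat.not_even_two_mul_add_one t)]
      refine ((ho.comp (tendsto_sub_atTop_nat (t + 1))).mul_const (d (2 * t + 1))).congr' ?_
      filter_upwards [eventually_ge_atTop (t + 1)] with m hm
      simp only [F, Function.comp_apply, if_pos (by omega : 2 * t + 1 ≤ 2 * m)]
      congr 2
      omega
  · simp only [F]
    split_ifs
    · rw [norm_mul, Real.norm_eq_abs, Real.norm_eq_abs]
      exact mul_le_mul_of_nonneg_right (hM _) (abs_nonneg _)
    · simpa using mul_nonneg ((abs_nonneg _).trans (hM 0)) (abs_nonneg (d j))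

namespace fracKernel

variable {α : ℝ}

theorem tendsto_volterraConv_two_mul_atTop (hα0 : 0 < α) (hα1 : α ≤ 1) {g : ℕ → ℝ}
    {M c : ℝ} (hM : ∀ k, |g k| ≤ M) (hc : 0 < c)
    (hs : Tendsto (fun i => g (2 * i) + g (2 * i + 1)) atTop (𝓝 c)) :
    Tendsto (fun m => volterraConv g (fracKernel α) (2 * m)) atTop atTop := by
  have hM0 : 0 ≤ M := (abs_nonneg _).trans (hM 0)
  have hmain := tendsto_sum_mul_sub_atTop (a := fun i => fracKernel α (2 * i + 1))
    (fun i => (pos hα0 (2 * i)).le) (fun i => le_Gamma hα0 hα1 (2 * i))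
    (tendsto_sum_odd_atTop hα0 hα1) hc hs
  -- the correction terms are controlled by the telescoping sum `∑ (U (2i+1) - U (2i+3))`
  have herr : ∀ m, -(M * Gamma α) ≤ ∑ i ∈ range m, g (2 * (m - 1 - i))
      * (fracKernel α (2 * i + 2) - fracKernel α (2 * i + 1)) := fun m => by
    have hterm : ∀ i ∈ range m,
        -(M * (fracKernel α (2 * i + 1) - fracKernel α (2 * (i + 1) + 1)))
          ≤ g (2 * (m - 1 - i)) * (fracKernel α (2 * i + 2) - fracKernel α (2 * i + 1)) :=
      fun i _ => by
        have h1 : fracKernel α (2 * i + 2) ≤ fracKernel α (2 * i + 1) :=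
          antitone hα0 hα1 (Nat.le_succ (2 * i))
        have h2 : fracKernel α (2 * (i + 1) + 1) ≤ fracKernel α (2 * i + 2) :=
          antitone hα0 hα1 (by omega)
        have := abs_le.1 (hM (2 * (m - 1 - i)))
        nlinarith
    refine le_trans ?_ (sum_le_sum hterm)
    rw [sum_neg_distrib, ← mul_sum, sum_range_sub' (fun i => fracKernel α (2 * i + 1)),
      neg_le_neg_iff]
    simp only [mul_zero, zero_add, one]
    nlinarith [pos hα0 (2 * m)]
  refine tendsto_atTop_mono (fun m => ?_) (tendsto_atTop_add_const_right _ (-(M * Gamma α)) hmain)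
  rw [volterraConv_two_mul]
  exact add_le_add_right (herr m) _

theorem add_eq_zero_of_tendsto_volterraConv (hα0 : 0 < α) (hα1 : α ≤ 1) {g : ℕ → ℝ}
    {ℓ a b : ℝ}
    (hconv : Tendsto (fun m => volterraConv g (fracKernel α) (2 * m)) atTop (𝓝 ℓ))
    (he : Tendsto (fun N => g (2 * N)) atTop (𝓝 a))
    (ho : Tendsto (fun N => g (2 * N + 1)) atTop (𝓝 b)) : a + b = 0 := by
  obtain ⟨M, hM⟩ := exists_forall_abs_le_of_tendsto_even_odd he ho
  rcases lt_trichotomy (a + b) 0 with h | h | h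
  · have hdiv := tendsto_volterraConv_two_mul_atTop hα0 hα1 (g := -g) (c := -a + -b)
      (fun k => by simpa using hM k) (by linarith) (he.neg.add ho.neg)
    simp only [volterraConv_neg] at hdiv
    exact absurd hdiv (not_tendsto_atTop_of_tendsto_nhds hconv.neg)
  · exact h
  · exact absurd (tendsto_volterraConv_two_mul_atTop hα0 hα1 hM h (he.add ho))
      (not_tendsto_atTop_of_tendsto_nhds hconv)

theorem tendsto_volterraConv_sub (hα0 : 0 < α) (hα1 : α ≤ 1) {g : ℕ → ℝ} {a b : ℝ}
    (he : Tendsto (fun N => g (2 * N)) atTop (𝓝 a))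
    (ho : Tendsto (fun N => g (2 * N + 1)) atTop (𝓝 b)) (hab : a + b = 0) :
    Tendsto (fun m => volterraConv g (fracKernel α) (2 * m + 2)
        - volterraConv g (fracKernel α) (2 * m + 1)) atTop
      (𝓝 (b * (Gamma α * 2 ^ (1 - α)))) := by
  have hlim := (ho.mul_const (fracKernel α 1)).add
    (tendsto_sum_range_mul_of_tendsto_even_odd (summable_abs_sub hα0 hα1) he ho)
  have htsum : ∑' j, (if Even j then a else b) * (fracKernel α (j + 2) - fracKernel α (j + 1))
      = -b * ∑' j, (-1) ^ j * (fracKernel α (j + 2) - fracKernel α (j + 1)) := by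
    rw [← tsum_mul_left]
    congr 1 with j
    rcases Nat.even_or_odd j with hj | hj
    · rw [if_pos hj, hj.neg_one_pow, eq_neg_of_add_eq_zero_left hab]; ring
    · rw [if_neg (Nat.not_even_iff_odd.2 hj), hj.neg_one_pow]; ring
  rw [htsum, tsum_neg_one_pow_mul_sub hα0 hα1, one] at hlim
  convert hlim using 2 with m
  · rw [volterraConv_succ_sub, one, Nat.add_sub_cancel]
  · ring

theorem two_cycle_of_volterra (hα0 : 0 < α) (hα1 : α ≤ 1) {g z : ℕ → ℝ}
    (hz : ∀ n, z n = z 0 + volterraConv g (fracKernel α) n) {zo ze go ge : ℝ}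
    (hzo : Tendsto (fun N => z (2 * N + 1)) atTop (𝓝 zo))
    (hze : Tendsto (fun N => z (2 * N + 2)) atTop (𝓝 ze))
    (hgo : Tendsto (fun N => g (2 * N + 1)) atTop (𝓝 go))
    (hge : Tendsto (fun N => g (2 * N + 2)) atTop (𝓝 ge)) :
    ge + go = 0 ∧ ze - zo = go * (Gamma α * 2 ^ (1 - α)) := by
  have hge' : Tendsto (fun N => g (2 * N)) atTop (𝓝 ge) :=
    (tendsto_add_atTop_iff_nat 1).1 hge
  have hze' : Tendsto (fun N => z (2 * N)) atTop (𝓝 ze) :=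
    (tendsto_add_atTop_iff_nat 1).1 hze
  have hsum : ge + go = 0 := add_eq_zero_of_tendsto_volterraConv hα0 hα1
    ((hze'.sub_const (z 0)).congr fun m => by rw [hz (2 * m), add_sub_cancel_left]) hge' hgo
  refine ⟨hsum, tendsto_nhds_unique (hze.sub hzo) ?_⟩
  refine (tendsto_volterraConv_sub hα0 hα1 hge' hgo hsum).congr fun m => ?_
  rw [hz (2 * m + 2), hz (2 * m + 1)]
  ring

end fracKernel

theorem eq_add_volterraConv_of_eq_sub {α c : ℝ} {U z φ : ℕ → ℝ}
    (hU : ∀ n, 1 ≤ n → U n = fracKernel α n)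
    (hz : ∀ n, 1 ≤ n → z n = z 0 - ∑ k ∈ range n, (-c * φ k) * U (n - k)) (n : ℕ) :
    z n = z 0 + volterraConv (fun k => c * φ k) (fracKernel α) n := by
  rcases Nat.eq_zero_or_pos n with rfl | hn
  · simp [volterraConv]
  rw [hz n hn, volterraConv, sub_eq_add_neg, ← sum_neg_distrib]
  congr 1
  refine sum_congr rfl fun k hk => ?_
  rw [hU (n - k) (by simp at hk; omega)]
  ring

theorem fractional_difference_henon_period_two_general
    (α h a b : ℝ) (hα0 : 0 < α) (hα1 : α < 1) (hh : 0 < h)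
    (U : ℕ → ℝ)
    (hU : ∀ n : ℕ, 1 ≤ n → U n = Real.Gamma (n + α - 1) / Real.Gamma n)
    (x y : ℕ → ℝ)
    (hrecx : ∀ n, 1 ≤ n → x n = x 0 -
      ∑ k ∈ Finset.range n,
        (-(h ^ α / Real.Gamma α) * (1 - x k - a * (x k) ^ 2 + y k)) * U (n - k))
    (hrecy : ∀ n, 1 ≤ n → y n = y 0 -
      ∑ k ∈ Finset.range n,
        (-(h ^ α / Real.Gamma α) * (b * x k - y k)) * U (n - k))
    (x₁ y₁ x₂ y₂ : ℝ)
    (hodd : Tendsto (fun N => (x (2 * N + 1), y (2 * N + 1))) atTop (nhds (x₁, y₁)))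
    (heven : Tendsto (fun N => (x (2 * N + 2), y (2 * N + 2))) atTop (nhds (x₂, y₂))) :
    (x₂ - x₁ = (h / 2) ^ α * ((x₂ - x₁) * (1 + a * (x₂ + x₁)) - (y₂ - y₁))) ∧
    (y₂ - y₁ = (h / 2) ^ α * ((y₂ - y₁) - b * (x₂ - x₁))) ∧
    (2 - (x₂ + x₁) - a * (x₂ ^ 2 + x₁ ^ 2) + (y₂ + y₁) = 0) ∧
    (b * (x₁ + x₂) - (y₁ + y₂) = 0) := by
  set c := h ^ α / Gamma α with hc_def
  have hc : c ≠ 0 := (div_pos (rpow_pos_of_pos hh α) (Gamma_pos_of_pos hα0)).ne'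
  have hscale : c * (Gamma α * 2 ^ (1 - α)) = 2 * (h / 2) ^ α := by
    rw [hc_def, div_rpow hh.le zero_le_two, rpow_sub zero_lt_two, rpow_one]
    field_simp [(Gamma_pos_of_pos hα0).ne']
  have hx₁ := hodd.fst_nhds; have hy₁ := hodd.snd_nhds
  have hx₂ := heven.fst_nhds; have hy₂ := heven.snd_nhds
  obtain ⟨hx_sum, hx_diff⟩ := fracKernel.two_cycle_of_volterra hα0 hα1.le
    (eq_add_volterraConv_of_eq_sub (φ := fun k => 1 - x k - a * x k ^ 2 + y k) hU hrecx)
    hx₁ hx₂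
    ((((tendsto_const_nhds.sub hx₁).sub ((hx₁.pow 2).const_mul a)).add hy₁).const_mul c)
    ((((tendsto_const_nhds.sub hx₂).sub ((hx₂.pow 2).const_mul a)).add hy₂).const_mul c)
  obtain ⟨hy_sum, hy_diff⟩ := fracKernel.two_cycle_of_volterra hα0 hα1.le
    (eq_add_volterraConv_of_eq_sub (φ := fun k => b * x k - y k) hU hrecy) hy₁ hy₂
    (((hx₁.const_mul b).sub hy₁).const_mul c) (((hx₂.const_mul b).sub hy₂).const_mul c)
  have hiii : 2 - (x₂ + x₁) - a * (x₂ ^ 2 + x₁ ^ 2) + (y₂ + y₁) = 0 :=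
    (mul_eq_zero.1 (by linear_combination hx_sum)).resolve_left hc
  have hiv : b * (x₁ + x₂) - (y₁ + y₂) = 0 :=
    (mul_eq_zero.1 (by linear_combination hy_sum)).resolve_left hc
  refine ⟨?_, ?_, hiii, hiv⟩
  · linear_combination hx_diff + (1 - x₁ - a * x₁ ^ 2 + y₁) * hscale + (h / 2) ^ α * hiii
  · linear_combination hy_diff + (b * x₁ - y₁) * hscale + (h / 2) ^ α * hiv

/-- The asymptotic period-2 points of the fractional difference Hénon map of order
`α` with time step `h` satisfy the period-2 system (i)–(iv). -/
theorem fractional_difference_henon_period_two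
    (α h a b : ℝ) (hα0 : 0 < α) (hα1 : α < 1) (hh : 0 < h)
    (U : ℕ → ℝ)
    (hU0 : U 0 = 0)
    (hU : ∀ n : ℕ, 1 ≤ n → U n = Real.Gamma (n + α - 1) / Real.Gamma n)
    (x y : ℕ → ℝ)
    (hrecx : ∀ n, 1 ≤ n → x n = x 0 -
      ∑ k ∈ Finset.range n,
        (-(h ^ α / Real.Gamma α) * (1 - x k - a * (x k) ^ 2 + y k)) * U (n - k))
    (hrecy : ∀ n, 1 ≤ n → y n = y 0 -
      ∑ k ∈ Finset.range n,
        (-(h ^ α / Real.Gamma α) * (b * x k - y k)) * U (n - k))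
    (x₁ y₁ x₂ y₂ : ℝ)
    (hodd : Tendsto (fun N => (x (2 * N + 1), y (2 * N + 1))) atTop (nhds (x₁, y₁)))
    (heven : Tendsto (fun N => (x (2 * N + 2), y (2 * N + 2))) atTop (nhds (x₂, y₂))) :
    (x₂ - x₁ = (h / 2) ^ α * ((x₂ - x₁) * (1 + a * (x₂ + x₁)) - (y₂ - y₁))) ∧
    (y₂ - y₁ = (h / 2) ^ α * ((y₂ - y₁) - b * (x₂ - x₁))) ∧
    (2 - (x₂ + x₁) - a * (x₂ ^ 2 + x₁ ^ 2) + (y₂ + y₁) = 0) ∧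
    (b * (x₁ + x₂) - (y₁ + y₂) = 0) :=
  fractional_difference_henon_period_two_general α h a b hα0 hα1 hh U hU x y hrecx hrecy x₁ y₁ x₂ y₂
    hodd heven
end

section
/- Let 0 < α < 1, h > 0, a, b ∈ ℝ, and let U_α(n) = Γ(n+α−1)/Γ(n) for n ≥ 1 with U_α(0) = 0 be the falling factorial kernel. Suppose (x₁(n), x₂(n)) satisfies the fractional difference Lozi recurrence x_i(n) = x_i(0) − ∑_{k=0}^{n−1} G_i(x₁(k), x₂(k)) U_α(n−k), i = 1,2, with G₁(x,y) = −(h^α/Γ(α))(1 − x − a|x| + y) and G₂(x,y) = −(h^α/Γ(α))(b x − y), and that the limits (x₁, y₁) = lim_{N→∞} (x₁(2N+1), x₂(2N+1)) and (x₂, y₂) = lim_{N→∞} (x₁(2N+2), x₂(2N+2)) exist. Then: (i) x₂ − x₁ = (h/2)^α [ (x₂ − x₁) + a(|x₂| − |x₁|) − (y₂ − y₁) ]; (ii) y₂ − y₁ = (h/2)^α [ (y₂ − y₁) − b (x₂ − x₁) ]; (iii) 2 − (x₂ + x₁) − a(|x₂| + |x₁|) + (y₂ + y₁) = 0; (iv)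 b(x₁ + x₂) − (y₁ + y₂) = 0. -/
/-!
Write `c j = Γ(j + α) / (Γ(α) j!)`, the coefficients of `(1 - x)^(-α)` (`Ring.multichoose α j`).
Each coordinate then satisfies `z (n + 1) = z 0 + h^α ∑_{i + j = n} g i c j`, where `g` is the
forcing term (`1 - x - a|x| + y`, resp. `b x - y`), with parity limits `p` and `q`.

Since `c` decreases to `0`, consecutive differences of the convolution are
`g (n + 1) c 0 - ∑_j (c j - c (j + 1)) g (n - j)`; by dominated convergence along `n = 2N` they tend
to `(p - q) ∑_j (-1)^j c j`, and Abel's theorem evaluates the alternating series as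
`lim_{x → 1⁻} (1 + x)^(-α) = 2^(-α)`. This gives (i) and (ii).

Sums of consecutive terms are the convolution of `g i + g (i + 1) → p + q` with `c`. As
`c j ≥ α / j`, the partial sums `S n = ∑_{j ≤ n} c j` diverge, so this convolution is
`(p + q) S n + o(S n)`; it also stays bounded because the trajectory does, hence `p + q = 0`, which
is (iii) and (iv).
-/

open Filter Finset Real Topology Asymptotics
open scoped Nat

section Multichoose

variable {α : ℝ}

lemma multichoose_succ_mul (α : ℝ) (n : ℕ) :
    ((n : ℝ) + 1) * Ring.multichoose α (n + 1) = (α + n) * Ring.multichoose α n := by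
  have hfac : ∀ m : ℕ, (m ! : ℝ) * Ring.multichoose α m = (ascPochhammer ℝ m).eval α := fun m ↦ by
    rw [← nsmul_eq_mul, Ring.factorial_nsmul_multichoose_eq_ascPochhammer,
      Polynomial.ascPochhammer_smeval_eq_eval]
  have h := hfac (n + 1)
  rw [ascPochhammer_succ_eval, ← hfac, Nat.factorial_succ, Nat.cast_mul] at h
  have hn : (n ! : ℝ) ≠ 0 := by positivity
  push_cast at h
  apply mul_left_cancel₀ hn
  linear_combination h

lemma multichoose_pos (hα : 0 < α) (n : ℕ) : 0 < Ring.multichoose α n := by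
  induction n with
  | zero => simp
  | succ n ih =>
    have h : 0 < ((n : ℝ) + 1) * Ring.multichoose α (n + 1) := by
      rw [multichoose_succ_mul]; positivity
    exact pos_of_mul_pos_right h (by positivity)

lemma multichoose_antitone (hα0 : 0 < α) (hα1 : α ≤ 1) : Antitone (Ring.multichoose α) := by
  refine antitone_nat_of_succ_le fun n ↦ ?_
  have h := multichoose_succ_mul α n
  have := multichoose_pos hα0 n
  have := multichoose_pos hα0 (n + 1)
  nlinarith

lemma multichoose_le_exp (hα : 0 < α) (n : ℕ) :
    Ring.multichoose α n ≤ exp ((α - 1) * ∑ i ∈ range n, 1 / ((i : ℝ) + 1)) := by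
  induction n with
  | zero => simp
  | succ n ih =>
    have hrec : Ring.multichoose α (n + 1) =
        Ring.multichoose α n * ((α - 1) * (1 / ((n : ℝ) + 1)) + 1) := by
      have := multichoose_succ_mul α n
      field_simp
      linear_combination this
    rw [hrec, sum_range_succ, mul_add (α - 1), exp_add]
    gcongr
    · have := multichoose_pos hα (n + 1)
      rw [hrec] at this
      exact (pos_of_mul_pos_right this (multichoose_pos hα n).le).le
    · exact add_one_le_exp _

lemma tendsto_multichoose_zero (hα0 : 0 < α) (hα1 : α < 1) :
    Tendsto (Ring.multichoose α) atTop (𝓝 0) :=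
  squeeze_zero (fun n ↦ (multichoose_pos hα0 n).le) (multichoose_le_exp hα0)
    (tendsto_exp_atBot.comp
      (tendsto_sum_range_one_div_nat_succ_atTop.const_mul_atTop_of_neg (by linarith)))

lemma le_succ_mul_multichoose_succ (hα : 0 < α) (n : ℕ) :
    α ≤ ((n : ℝ) + 1) * Ring.multichoose α (n + 1) := by
  induction n with
  | zero => simp
  | succ n ih =>
    rw [multichoose_succ_mul]
    push_cast
    nlinarith [multichoose_pos hα (n + 1)]

lemma tendsto_sum_multichoose_atTop (hα : 0 < α) :
    Tendsto (fun n ↦ ∑ j ∈ range (n + 1), Ring.multichoose α j) atTop atTop := by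
  refine tendsto_atTop_mono (fun n ↦ ?_)
    (tendsto_sum_range_one_div_nat_succ_atTop.const_mul_atTop hα)
  rw [sum_range_succ', mul_sum]
  refine le_add_of_le_of_nonneg (sum_le_sum fun i _ ↦ ?_) (multichoose_pos hα 0).le
  rw [mul_one_div, div_le_iff₀ (by positivity), mul_comm]
  exact le_succ_mul_multichoose_succ hα i

lemma Gamma_add_nat_eq_mul_multichoose (hα : 0 < α) (n : ℕ) :
    Gamma (α + n) = Gamma α * n ! * Ring.multichoose α n := by
  induction n with
  | zero => simp
  | succ n ih =>
    rw [Nat.cast_succ, ← add_assoc, Gamma_add_one (by positivity : (0 : ℝ) < α + n).ne', ih,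
      Nat.factorial_succ, Nat.cast_mul, Nat.cast_succ]
    linear_combination (-(Gamma α * n !)) * multichoose_succ_mul α n

lemma hasSum_multichoose_mul_pow (α : ℝ) {x : ℝ} (hx : |x| < 1) :
    HasSum (fun n ↦ Ring.multichoose α n * x ^ n) ((1 - x) ^ α)⁻¹ := by
  have := (one_div_one_sub_rpow_hasFPowerSeriesOnBall_zero α).hasSum (y := x) (by
    simpa [enorm_eq_nnnorm, ← NNReal.coe_lt_coe] using hx)
  simpa [FormalMultilinearSeries.ofScalars_apply_eq, Ring.multichoose_eq, add_sub_right_comm,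
    mul_comm] using this

lemma tendsto_sum_neg_one_pow_mul_multichoose (hα0 : 0 < α) (hα1 : α < 1) :
    Tendsto (fun n ↦ ∑ j ∈ range n, (-1) ^ j * Ring.multichoose α j) atTop (𝓝 (2 ^ α)⁻¹) := by
  obtain ⟨l, hl⟩ := (multichoose_antitone hα0 hα1.le).tendsto_alternating_series_of_tendsto_zero
    (tendsto_multichoose_zero hα0 hα1)
  have habel := tendsto_tsum_powerSeries_nhdsWithin_lt hl
  have hsum : ∀ x ∈ Set.Ioo (0 : ℝ) 1,
      ∑' n, (-1) ^ n * Ring.multichoose α n * x ^ n = ((1 + x) ^ α)⁻¹ := fun x hx ↦ by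
    have := (hasSum_multichoose_mul_pow α (x := -x) (by rw [abs_neg, abs_of_pos hx.1]; exact hx.2))
    simp only [neg_pow x, sub_neg_eq_add] at this
    rw [← this.tsum_eq]
    congr 1; funext n; ring
  have hlim : Tendsto (fun x : ℝ ↦ ((1 + x) ^ α)⁻¹) (𝓝[<] 1) (𝓝 (2 ^ α)⁻¹) := by
    have : ContinuousAt (fun x : ℝ ↦ ((1 + x) ^ α)⁻¹) 1 := by
      fun_prop (disch := first | positivity | norm_num)
    convert this.tendsto.mono_left nhdsWithin_le_nhds using 2
    norm_num
  have heq : (fun x : ℝ ↦ ((1 + x) ^ α)⁻¹) =ᶠ[𝓝[<] 1]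
      fun x ↦ ∑' n, (-1) ^ n * Ring.multichoose α n * x ^ n := by
    filter_upwards [Ioo_mem_nhdsLT zero_lt_one] with x hx using (hsum x hx).symm
  rwa [tendsto_nhds_unique habel (hlim.congr' heq)] at hl

end Multichoose

lemma tendsto_of_tendsto_odd_of_tendsto_even {X : Type*} {u : ℕ → X} {l : Filter X}
    (hodd : Tendsto (fun N ↦ u (2 * N + 1)) atTop l)
    (heven : Tendsto (fun N ↦ u (2 * N + 2)) atTop l) : Tendsto u atTop l := by
  intro s hs
  obtain ⟨A, hA⟩ := eventually_atTop.mp (hodd hs)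
  obtain ⟨B, hB⟩ := eventually_atTop.mp (heven hs)
  refine eventually_atTop.mpr ⟨2 * max A B + 1, fun n hn ↦ ?_⟩
  obtain ⟨k, rfl | rfl⟩ := Nat.even_or_odd' n
  · obtain ⟨m, rfl⟩ : ∃ m, k = m + 1 := ⟨k - 1, by omega⟩
    exact hB m (by omega)
  · exact hA k (by omega)

lemma exists_abs_le_of_tendsto_odd_of_tendsto_even {u : ℕ → ℝ} {p q : ℝ}
    (hodd : Tendsto (fun N ↦ u (2 * N + 1)) atTop (𝓝 p))
    (heven : Tendsto (fun N ↦ u (2 * N + 2)) atTop (𝓝 q)) : ∃ C, ∀ n, |u n| ≤ C := by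
  have habs : Tendsto (fun n ↦ |u n|) atTop (𝓝 |p| ⊔ 𝓝 |q|) :=
    tendsto_of_tendsto_odd_of_tendsto_even (hodd.abs.mono_right le_sup_left)
      (heven.abs.mono_right le_sup_right)
  obtain ⟨C, hC⟩ := IsBoundedUnder.bddAbove_range
    ((isBounded_sup (isBounded_le_nhds _) (isBounded_le_nhds _)).mono habs)
  exact ⟨C, fun n ↦ hC ⟨n, rfl⟩⟩

lemma tendsto_comp_two_mul_sub {g : ℕ → ℝ} {p q : ℝ}
    (hodd : Tendsto (fun N ↦ g (2 * N + 1)) atTop (𝓝 p))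
    (heven : Tendsto (fun N ↦ g (2 * N + 2)) atTop (𝓝 q)) (j : ℕ) :
    Tendsto (fun N ↦ g (2 * N - j)) atTop (𝓝 (if Even j then q else p)) := by
  obtain ⟨i, rfl | rfl⟩ := Nat.even_or_odd' j
  · rw [if_pos (even_two_mul i)]
    refine (heven.comp (tendsto_sub_atTop_nat (i + 1))).congr' ?_
    filter_upwards [eventually_ge_atTop (i + 1)] with N hN
    simp only [Function.comp_apply]
    congr 1; omega
  · rw [if_neg (Nat.not_even_two_mul_add_one i)]
    refine (hodd.comp (tendsto_sub_atTop_nat (i + 1))).congr' ?_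
    filter_upwards [eventually_ge_atTop (i + 1)] with N hN
    simp only [Function.comp_apply]
    congr 1; omega

lemma tendsto_sum_range_mul_of_dominated {d v : ℕ → ℝ} {u : ℕ → ℕ → ℝ} {n : ℕ → ℕ} {C : ℝ}
    (hd : Summable d) (hu : ∀ N j, |u N j| ≤ C)
    (huv : ∀ j, Tendsto (u · j) atTop (𝓝 (v j))) (hn : Tendsto n atTop atTop) :
    Tendsto (fun N ↦ ∑ j ∈ range (n N), d j * u N j) atTop (𝓝 (∑' j, d j * v j)) := by
  have hC : 0 ≤ C := (abs_nonneg _).trans (hu 0 0)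
  have key := tendsto_tsum_of_dominated_convergence
    (𝓕 := atTop) (f := fun N j ↦ if j < n N then d j * u N j else 0)
    (g := fun j ↦ d j * v j) (bound := fun j ↦ |d j| * C)
    (hd.abs.mul_right C) (fun j ↦ ?_) (Eventually.of_forall fun N j ↦ ?_)
  · refine key.congr fun N ↦ (tsum_eq_sum fun j hj ↦ ?_).trans (sum_congr rfl fun j hj ↦ ?_)
    · exact if_neg (by simpa using hj)
    · exact if_pos (mem_range.mp hj)
  · refine ((huv j).const_mul (d j)).congr' ?_
    filter_upwards [hn.eventually_gt_atTop j] with N hN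
    exact (if_pos hN).symm
  · split_ifs
    · rw [Real.norm_eq_abs, abs_mul]
      exact mul_le_mul_of_nonneg_left (hu N j) (abs_nonneg _)
    · simpa using mul_nonneg (abs_nonneg (d j)) hC

lemma Antitone.hasSum_sub_succ {f : ℕ → ℝ} {l : ℝ} (hf : Antitone f)
    (hl : Tendsto f atTop (𝓝 l)) : HasSum (fun n ↦ f n - f (n + 1)) (f 0 - l) := by
  rw [hasSum_iff_tendsto_nat_of_nonneg (fun n ↦ sub_nonneg.mpr (hf n.le_succ))]
  simpa only [sum_range_sub'] using hl.const_sub (f 0)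

lemma Antitone.hasSum_two_mul_sub {f : ℕ → ℝ} {L : ℝ} (hf : Antitone f)
    (hL : Tendsto (fun n ↦ ∑ j ∈ range n, (-1) ^ j * f j) atTop (𝓝 L)) :
    HasSum (fun k ↦ f (2 * k) - f (2 * k + 1)) L := by
  rw [hasSum_iff_tendsto_nat_of_nonneg (fun k ↦ sub_nonneg.mpr (hf (2 * k).le_succ))]
  have hpair : ∀ n, ∑ k ∈ range n, (f (2 * k) - f (2 * k + 1)) =
      ∑ j ∈ range (2 * n), (-1) ^ j * f j := fun n ↦ by
    induction n with
    | zero => simp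
    | succ n ih =>
      rw [sum_range_succ, ih, mul_add, mul_one, sum_range_succ, sum_range_succ, pow_succ,
        (even_two_mul n).neg_one_pow]
      ring
  exact (hL.comp (tendsto_id.const_mul_atTop' two_pos)).congr fun n ↦ (hpair n).symm

def cauchyProduct (g w : ℕ → ℝ) (n : ℕ) : ℝ :=
  ∑ ij ∈ antidiagonal n, g ij.1 * w ij.2

section CauchyProduct

variable {g w : ℕ → ℝ}

lemma cauchyProduct_eq_sum_range (g w : ℕ → ℝ) (n : ℕ) :
    cauchyProduct g w n = ∑ j ∈ range (n + 1), w j * g (n - j) := by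
  rw [cauchyProduct, ← Nat.sum_antidiagonal_swap]
  simpa [mul_comm] using Nat.sum_antidiagonal_eq_sum_range_succ (fun i j ↦ w i * g j) n

lemma cauchyProduct_succ_sub (g w : ℕ → ℝ) (n : ℕ) :
    cauchyProduct g w (n + 1) - cauchyProduct g w n =
      g (n + 1) * w 0 - cauchyProduct g (fun j ↦ w j - w (j + 1)) n := by
  simp only [cauchyProduct, Nat.sum_antidiagonal_succ', mul_sub, sum_sub_distrib]
  ring

lemma cauchyProduct_add_succ (g w : ℕ → ℝ) (n : ℕ) :
    cauchyProduct g w n + cauchyProduct g w (n + 1) =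
      cauchyProduct (fun i ↦ g i + g (i + 1)) w n + g 0 * w (n + 1) := by
  simp only [cauchyProduct, Nat.sum_antidiagonal_succ, add_mul, sum_add_distrib]
  ring

lemma cauchyProduct_sub_const (g w : ℕ → ℝ) (m : ℝ) (n : ℕ) :
    cauchyProduct (fun i ↦ g i - m) w n =
      cauchyProduct g w n - m * ∑ j ∈ range (n + 1), w j := by
  simp only [cauchyProduct_eq_sum_range, mul_sub, sum_sub_distrib, mul_comm m, sum_mul]

lemma tendsto_cauchyProduct_succ_sub {p q L : ℝ} (hw : Antitone w)
    (hw0 : Tendsto w atTop (𝓝 0))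
    (hL : Tendsto (fun n ↦ ∑ j ∈ range n, (-1) ^ j * w j) atTop (𝓝 L))
    (hodd : Tendsto (fun N ↦ g (2 * N + 1)) atTop (𝓝 p))
    (heven : Tendsto (fun N ↦ g (2 * N + 2)) atTop (𝓝 q)) :
    Tendsto (fun N ↦ cauchyProduct g w (2 * N + 1) - cauchyProduct g w (2 * N)) atTop
      (𝓝 ((p - q) * L)) := by
  set d : ℕ → ℝ := fun j ↦ w j - w (j + 1)
  have h2 : Tendsto (fun k : ℕ ↦ 2 * k) atTop atTop := tendsto_id.const_mul_atTop' two_pos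
  have hd : HasSum d (w 0) := by simpa using hw.hasSum_sub_succ hw0
  have hd_even : HasSum (fun k ↦ d (2 * k)) L := hw.hasSum_two_mul_sub hL
  have hd_odd : HasSum (fun k ↦ d (2 * k + 1)) (w 0 - L) := by
    have hpairs := Antitone.hasSum_sub_succ (f := fun k ↦ w (2 * k)) (fun a b hab ↦ hw (by omega))
      (hw0.comp h2)
    rw [mul_zero, sub_zero] at hpairs
    refine (hpairs.sub hd_even).congr_fun fun k ↦ ?_
    simp only [d]
    ring_nf
  have hdv : HasSum (fun j ↦ d j * if Even j then q else p) (L * q + (w 0 - L) * p) :=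
    HasSum.even_add_odd (by simpa using hd_even.mul_right q)
      (by simpa [Nat.not_even_two_mul_add_one] using hd_odd.mul_right p)
  obtain ⟨C, hC⟩ := exists_abs_le_of_tendsto_odd_of_tendsto_even hodd heven
  have hconv : Tendsto (fun N ↦ cauchyProduct g d (2 * N)) atTop
      (𝓝 (L * q + (w 0 - L) * p)) := by
    rw [← hdv.tsum_eq]
    simpa only [cauchyProduct_eq_sum_range] using
      tendsto_sum_range_mul_of_dominated (n := fun N ↦ 2 * N + 1) hd.summable
        (fun N j ↦ hC (2 * N - j)) (tendsto_comp_two_mul_sub hodd heven)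
        (tendsto_atTop_mono (fun N ↦ (by omega : N ≤ 2 * N + 1)) tendsto_id)
  simp only [cauchyProduct_succ_sub]
  convert (hodd.mul_const (w 0)).sub hconv using 2
  ring

lemma isLittleO_cauchyProduct {t : ℕ → ℝ} {W : ℝ} (hw0 : ∀ j, 0 ≤ w j) (hwW : ∀ j, w j ≤ W)
    (hS : Tendsto (fun n ↦ ∑ j ∈ range (n + 1), w j) atTop atTop)
    (ht : Tendsto t atTop (𝓝 0)) :
    cauchyProduct t w =o[atTop] fun n ↦ ∑ j ∈ range (n + 1), w j := by
  rw [isLittleO_iff]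
  intro ε hε
  obtain ⟨T, hT⟩ := ht.abs.bddAbove_range
  obtain ⟨M, hM⟩ : ∃ M, ∀ k ≥ M, |t k| ≤ ε / 2 :=
    eventually_atTop.mp (ht.abs.eventually (ge_mem_nhds (by simpa using half_pos hε)))
  filter_upwards [(hS.const_mul_atTop (half_pos hε)).eventually_ge_atTop (M * (W * T)),
    eventually_ge_atTop M] with n hn hMn
  have hSn : 0 ≤ ∑ j ∈ range (n + 1), w j := sum_nonneg fun j _ ↦ hw0 j
  rw [Real.norm_of_nonneg hSn, cauchyProduct_eq_sum_range,
    ← sum_range_add_sum_Ico _ (by omega : n + 1 - M ≤ n + 1), Real.norm_eq_abs]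
  have hhead : |∑ j ∈ range (n + 1 - M), w j * t (n - j)| ≤ ε / 2 * ∑ j ∈ range (n + 1), w j :=
    calc |∑ j ∈ range (n + 1 - M), w j * t (n - j)|
        ≤ ∑ j ∈ range (n + 1 - M), |w j * t (n - j)| := abs_sum_le_sum_abs _ _
      _ ≤ ∑ j ∈ range (n + 1 - M), ε / 2 * w j := sum_le_sum fun j hj ↦ by
          rw [abs_mul, abs_of_nonneg (hw0 j), mul_comm]
          exact mul_le_mul_of_nonneg_right (hM (n - j) (by simp at hj; omega)) (hw0 j)
      _ ≤ ∑ j ∈ range (n + 1), ε / 2 * w j :=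
          sum_le_sum_of_subset_of_nonneg (range_subset_range.mpr (by omega))
            fun j _ _ ↦ mul_nonneg (half_pos hε).le (hw0 j)
      _ = ε / 2 * ∑ j ∈ range (n + 1), w j := (mul_sum _ _ _).symm
  have htail : |∑ j ∈ Ico (n + 1 - M) (n + 1), w j * t (n - j)| ≤ M * (W * T) :=
    calc |∑ j ∈ Ico (n + 1 - M) (n + 1), w j * t (n - j)|
        ≤ ∑ j ∈ Ico (n + 1 - M) (n + 1), |w j * t (n - j)| := abs_sum_le_sum_abs _ _
      _ ≤ ∑ j ∈ Ico (n + 1 - M) (n + 1), W * T := sum_le_sum fun j _ ↦ by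
          rw [abs_mul, abs_of_nonneg (hw0 j)]
          exact mul_le_mul (hwW j) (hT ⟨_, rfl⟩) (abs_nonneg _) ((hw0 j).trans (hwW j))
      _ = M * (W * T) := by
          rw [sum_const, Nat.card_Ico, nsmul_eq_mul, Nat.sub_sub_self (by omega)]
  linarith [abs_add_le (∑ j ∈ range (n + 1 - M), w j * t (n - j))
    (∑ j ∈ Ico (n + 1 - M) (n + 1), w j * t (n - j))]

lemma add_eq_zero_of_bounded_cauchyProduct {p q W : ℝ} (hw0 : ∀ j, 0 ≤ w j) (hwW : ∀ j, w j ≤ W)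
    (hS : Tendsto (fun n ↦ ∑ j ∈ range (n + 1), w j) atTop atTop)
    (hodd : Tendsto (fun N ↦ g (2 * N + 1)) atTop (𝓝 p))
    (heven : Tendsto (fun N ↦ g (2 * N + 2)) atTop (𝓝 q))
    (hbdd : ∃ C, ∀ n, |cauchyProduct g w n| ≤ C) : p + q = 0 := by
  obtain ⟨C, hC⟩ := hbdd
  set s : ℕ → ℝ := fun i ↦ g i + g (i + 1)
  have hs : Tendsto s atTop (𝓝 (p + q)) := by
    refine tendsto_of_tendsto_odd_of_tendsto_even (hodd.add heven) ?_
    rw [add_comm p]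
    exact (heven.add ((tendsto_add_atTop_iff_nat 1).mpr hodd)).congr fun N ↦ by
      simp only [s]; ring_nf
  have hsmall : cauchyProduct (fun i ↦ s i - (p + q)) w =o[atTop]
      fun n ↦ ∑ j ∈ range (n + 1), w j :=
    isLittleO_cauchyProduct hw0 hwW hS (by simpa using hs.sub_const (p + q))
  have hbounded : cauchyProduct s w =o[atTop] fun n ↦ ∑ j ∈ range (n + 1), w j := by
    refine IsBigO.trans_isLittleO (g := fun _ ↦ (1 : ℝ)) ?_
      ((isLittleO_one_left_iff ℝ).mpr (tendsto_norm_atTop_atTop.comp hS))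
    refine IsBigO.of_bound (2 * C + |g 0| * W) (Eventually.of_forall fun n ↦ ?_)
    have hsplit := cauchyProduct_add_succ g w n
    have hlast : |g 0 * w (n + 1)| ≤ |g 0| * W := by
      rw [abs_mul, abs_of_nonneg (hw0 _)]
      exact mul_le_mul_of_nonneg_left (hwW _) (abs_nonneg _)
    rw [norm_one, mul_one, Real.norm_eq_abs, show cauchyProduct s w n = _ from
      eq_sub_of_add_eq hsplit.symm]
    linarith [abs_sub (cauchyProduct g w n + cauchyProduct g w (n + 1)) (g 0 * w (n + 1)),
      abs_add_le (cauchyProduct g w n) (cauchyProduct g w (n + 1)), hC n, hC (n + 1)]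
  have hmean : (fun n ↦ (p + q) * ∑ j ∈ range (n + 1), w j) =o[atTop]
      fun n ↦ ∑ j ∈ range (n + 1), w j :=
    (hbounded.sub hsmall).congr_left fun n ↦ by rw [cauchyProduct_sub_const]; ring
  by_contra hm
  exact isLittleO_irrefl ((hS.eventually_gt_atTop 0).frequently.mono fun n hn ↦ hn.ne')
    ((isLittleO_const_mul_left_iff hm).mp hmean)

end CauchyProduct

section Volterra

variable {α h : ℝ} {U g z : ℕ → ℝ}

lemma kernel_eq_Gamma_mul_multichoose (hα : 0 < α)
    (hU : ∀ n : ℕ, 1 ≤ n → U n = Gamma (n + α - 1) / Gamma n) (j : ℕ) :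
    U (j + 1) = Gamma α * Ring.multichoose α j := by
  rw [hU (j + 1) (by omega), Nat.cast_succ, Gamma_nat_eq_factorial,
    show (j : ℝ) + 1 + α - 1 = α + j by ring, Gamma_add_nat_eq_mul_multichoose hα]
  field_simp

lemma volterra_eq_add_rpow_mul_cauchyProduct (hα : 0 < α)
    (hU : ∀ n : ℕ, 1 ≤ n → U n = Gamma (n + α - 1) / Gamma n)
    (hz : ∀ n, 1 ≤ n → z n = z 0 - ∑ k ∈ range n, (-(h ^ α / Gamma α) * g k) * U (n - k))
    (n : ℕ) : z (n + 1) = z 0 + h ^ α * cauchyProduct g (Ring.multichoose α) n := by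
  have hΓ : Gamma α ≠ 0 := (Gamma_pos_of_pos hα).ne'
  rw [hz (n + 1) (by omega), cauchyProduct,
    Nat.sum_antidiagonal_eq_sum_range_succ (fun i j ↦ g i * Ring.multichoose α j), mul_sum,
    sub_eq_add_neg, ← sum_neg_distrib]
  refine congrArg _ (sum_congr rfl fun k hk ↦ ?_)
  rw [show n + 1 - k = n - k + 1 by have := mem_range.mp hk; omega,
    kernel_eq_Gamma_mul_multichoose hα hU]
  field_simp

variable {p q : ℝ}

lemma volterra_limit_sub_eq (hα0 : 0 < α) (hα1 : α < 1) (hh : 0 ≤ h)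
    (hz : ∀ n, z (n + 1) = z 0 + h ^ α * cauchyProduct g (Ring.multichoose α) n)
    (hgodd : Tendsto (fun N ↦ g (2 * N + 1)) atTop (𝓝 p))
    (hgeven : Tendsto (fun N ↦ g (2 * N + 2)) atTop (𝓝 q))
    {z₁ z₂ : ℝ} (hzodd : Tendsto (fun N ↦ z (2 * N + 1)) atTop (𝓝 z₁))
    (hzeven : Tendsto (fun N ↦ z (2 * N + 2)) atTop (𝓝 z₂)) :
    z₂ - z₁ = (h / 2) ^ α * (p - q) := by
  have hlim := (tendsto_cauchyProduct_succ_sub (multichoose_antitone hα0 hα1.le)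
    (tendsto_multichoose_zero hα0 hα1) (tendsto_sum_neg_one_pow_mul_multichoose hα0 hα1)
    hgodd hgeven).const_mul (h ^ α)
  have hdiff : ∀ N, h ^ α * (cauchyProduct g (Ring.multichoose α) (2 * N + 1) -
      cauchyProduct g (Ring.multichoose α) (2 * N)) = z (2 * N + 2) - z (2 * N + 1) := fun N ↦ by
    rw [hz, hz]
    ring
  rw [tendsto_nhds_unique (hzeven.sub hzodd) (hlim.congr hdiff), div_rpow hh zero_le_two]
  ring

lemma volterra_forcing_limits_add_eq_zero (hα0 : 0 < α) (hα1 : α < 1) (hh : 0 < h)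
    (hz : ∀ n, z (n + 1) = z 0 + h ^ α * cauchyProduct g (Ring.multichoose α) n)
    (hgodd : Tendsto (fun N ↦ g (2 * N + 1)) atTop (𝓝 p))
    (hgeven : Tendsto (fun N ↦ g (2 * N + 2)) atTop (𝓝 q))
    (hz_bdd : ∃ C, ∀ n, |z n| ≤ C) :
    p + q = 0 := by
  refine add_eq_zero_of_bounded_cauchyProduct (fun j ↦ (multichoose_pos hα0 j).le)
    (fun j ↦ multichoose_antitone hα0 hα1.le (Nat.zero_le j)) (tendsto_sum_multichoose_atTop hα0)
    hgodd hgeven ?_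
  obtain ⟨C, hC⟩ := hz_bdd
  have hpos : 0 < h ^ α := rpow_pos_of_pos hh α
  refine ⟨2 * C / h ^ α, fun n ↦ ?_⟩
  have hP : cauchyProduct g (Ring.multichoose α) n = (z (n + 1) - z 0) / h ^ α := by
    rw [hz]
    field_simp
    ring
  rw [hP, abs_div, abs_of_pos hpos]
  exact (div_le_div_iff_of_pos_right hpos).mpr
    (by linarith [abs_sub (z (n + 1)) (z 0), hC (n + 1), hC 0])

end Volterra

theorem fractional_difference_lozi_period_two_general
    (α h a b : ℝ) (hα0 : 0 < α) (hα1 : α < 1) (hh : 0 < h)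
    (U : ℕ → ℝ)
    (hU : ∀ n : ℕ, 1 ≤ n → U n = Real.Gamma (n + α - 1) / Real.Gamma n)
    (x y : ℕ → ℝ)
    (hrecx : ∀ n, 1 ≤ n → x n = x 0 -
      ∑ k ∈ Finset.range n,
        (-(h ^ α / Real.Gamma α) * (1 - x k - a * |x k| + y k)) * U (n - k))
    (hrecy : ∀ n, 1 ≤ n → y n = y 0 -
      ∑ k ∈ Finset.range n,
        (-(h ^ α / Real.Gamma α) * (b * x k - y k)) * U (n - k))
    (x₁ y₁ x₂ y₂ : ℝ)
    (hodd : Tendsto (fun N => (x (2 * N + 1), y (2 * N + 1))) atTop (nhds (x₁, y₁)))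
    (heven : Tendsto (fun N => (x (2 * N + 2), y (2 * N + 2))) atTop (nhds (x₂, y₂))) :
    (x₂ - x₁ = (h / 2) ^ α * ((x₂ - x₁) + a * (|x₂| - |x₁|) - (y₂ - y₁))) ∧
    (y₂ - y₁ = (h / 2) ^ α * ((y₂ - y₁) - b * (x₂ - x₁))) ∧
    (2 - (x₂ + x₁) - a * (|x₂| + |x₁|) + (y₂ + y₁) = 0) ∧
    (b * (x₁ + x₂) - (y₁ + y₂) = 0) := by
  have hx := volterra_eq_add_rpow_mul_cauchyProduct hα0 hU hrecx
  have hy := volterra_eq_add_rpow_mul_cauchyProduct hα0 hU hrecy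
  have hxodd : Tendsto (fun N ↦ x (2 * N + 1)) atTop (𝓝 x₁) := hodd.fst_nhds
  have hyodd : Tendsto (fun N ↦ y (2 * N + 1)) atTop (𝓝 y₁) := hodd.snd_nhds
  have hxeven : Tendsto (fun N ↦ x (2 * N + 2)) atTop (𝓝 x₂) := heven.fst_nhds
  have hyeven : Tendsto (fun N ↦ y (2 * N + 2)) atTop (𝓝 y₂) := heven.snd_nhds
  have hgxodd := ((tendsto_const_nhds (x := (1 : ℝ)) |>.sub hxodd).sub
    (hxodd.abs.const_mul a)).add hyodd
  have hgxeven := ((tendsto_const_nhds (x := (1 : ℝ)) |>.sub hxeven).sub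
    (hxeven.abs.const_mul a)).add hyeven
  have hgyodd := (hxodd.const_mul b).sub hyodd
  have hgyeven := (hxeven.const_mul b).sub hyeven
  have hx1 := volterra_limit_sub_eq hα0 hα1 hh.le hx hgxodd hgxeven hxodd hxeven
  have hx2 := volterra_forcing_limits_add_eq_zero hα0 hα1 hh hx hgxodd hgxeven
    (exists_abs_le_of_tendsto_odd_of_tendsto_even hxodd hxeven)
  have hy1 := volterra_limit_sub_eq hα0 hα1 hh.le hy hgyodd hgyeven hyodd hyeven
  have hy2 := volterra_forcing_limits_add_eq_zero hα0 hα1 hh hy hgyodd hgyeven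
    (exists_abs_le_of_tendsto_odd_of_tendsto_even hyodd hyeven)
  exact ⟨by linear_combination hx1, by linear_combination hy1, by linear_combination hx2,
    by linear_combination hy2⟩

/-- The asymptotic period-2 points of the fractional difference Lozi map of order
`α` with time step `h` satisfy the period-2 system (i)–(iv). -/
theorem fractional_difference_lozi_period_two
    (α h a b : ℝ) (hα0 : 0 < α) (hα1 : α < 1) (hh : 0 < h)
    (U : ℕ → ℝ)
    (hU0 : U 0 = 0)
    (hU : ∀ n : ℕ, 1 ≤ n → U n = Real.Gamma (n + α - 1) / Real.Gamma n)
    (x y : ℕ → ℝ)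
    (hrecx : ∀ n, 1 ≤ n → x n = x 0 -
      ∑ k ∈ Finset.range n,
        (-(h ^ α / Real.Gamma α) * (1 - x k - a * |x k| + y k)) * U (n - k))
    (hrecy : ∀ n, 1 ≤ n → y n = y 0 -
      ∑ k ∈ Finset.range n,
        (-(h ^ α / Real.Gamma α) * (b * x k - y k)) * U (n - k))
    (x₁ y₁ x₂ y₂ : ℝ)
    (hodd : Tendsto (fun N => (x (2 * N + 1), y (2 * N + 1))) atTop (nhds (x₁, y₁)))
    (heven : Tendsto (fun N => (x (2 * N + 2), y (2 * N + 2))) atTop (nhds (x₂, y₂))) :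
    (x₂ - x₁ = (h / 2) ^ α * ((x₂ - x₁) + a * (|x₂| - |x₁|) - (y₂ - y₁))) ∧
    (y₂ - y₁ = (h / 2) ^ α * ((y₂ - y₁) - b * (x₂ - x₁))) ∧
    (2 - (x₂ + x₁) - a * (|x₂| + |x₁|) + (y₂ + y₁) = 0) ∧
    (b * (x₁ + x₂) - (y₁ + y₂) = 0) :=
  fractional_difference_lozi_period_two_general α h a b hα0 hα1 hh U hU x y hrecx hrecy x₁ y₁ x₂ y₂
    hodd heven
end
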